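/- arXiv:1603.00109 — 2 statements merged into one kernel-verified Lean document; each statement's English description precedes it below -/
import Mathlib

section
/- In R = K⟨x,y⟩/(xy−1), the two-sided ideal I generated by 1−yx equals the internal direct sum ⊕_{n≥1} Rf_n of the left ideals generated by the idempotents f_n = y^{n−1}x^{n−1} − y^n x^n. -/
noncomputable section

/-- The defining relation of the Toeplitz/Jacobson algebra: `x * y = 1`. -/
inductive ToeplitzRel (K : Type*) [Field K] :
    FreeAlgebra K (Fin 2) → FreeAlgebra K (Fin 2) → Prop
  | rel : ToeplitzRel K (FreeAlgebra.ι K 0 * FreeAlgebra.ι K 1) 1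

/-- The Toeplitz/Jacobson algebra `R = K⟨x,y⟩/(xy-1)`. -/
abbrev Toeplitz (K : Type*) [Field K] := RingQuot (ToeplitzRel K)

variable (K : Type*) [Field K]

/-- The image of the generator `x` in `R`. -/
def tx : Toeplitz K := RingQuot.mkAlgHom K (ToeplitzRel K) (FreeAlgebra.ι K 0)

/-- The image of the generator `y` in `R`. -/
def ty : Toeplitz K := RingQuot.mkAlgHom K (ToeplitzRel K) (FreeAlgebra.ι K 1)

/-- `f n = y^(n-1) x^(n-1) - y^n x^n`. -/
def tf (n : ℕ) : Toeplitz K := ty K ^ (n-1) * tx K ^ (n-1) - ty K ^ n * tx K ^ n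

/-- `e a = y^a x^a`. -/
def te (a : ℕ) : Toeplitz K := ty K ^ a * tx K ^ a

lemma xy_one : tx K * ty K = 1 := by
  have h := RingQuot.mkAlgHom_rel K (ToeplitzRel.rel (K := K))
  simpa [tx, ty, map_mul, map_one] using h

lemma xpow_ypow (a : ℕ) : tx K ^ a * ty K ^ a = 1 := by
  induction a with
  | zero => simp
  | succ n ih =>
    rw [pow_succ, pow_succ']
    calc tx K ^ n * tx K * (ty K * ty K ^ n)
        = tx K ^ n * (tx K * ty K) * ty K ^ n := by noncomm_ring
      _ = 1 := by rw [xy_one]; simpa using ih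

lemma te_mul (a b : ℕ) : te K a * te K b = te K (max a b) := by
  rcases le_total a b with h | h
  · rw [max_eq_right h]; simp only [te]
    have hb : ty K ^ b = ty K ^ a * ty K ^ (b - a) := by
      rw [← pow_add, Nat.add_sub_cancel' h]
    calc ty K ^ a * tx K ^ a * (ty K ^ b * tx K ^ b)
        = ty K ^ a * ((tx K ^ a * ty K ^ a) * ty K ^ (b-a)) * tx K ^ b := by
          rw [hb]; noncomm_ring
      _ = ty K ^ a * ty K ^ (b-a) * tx K ^ b := by rw [xpow_ypow]; noncomm_ring
      _ = ty K ^ b * tx K ^ b := by rw [← pow_add, Nat.add_sub_cancel' h]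
  · rw [max_eq_left h]; simp only [te]
    have ha : tx K ^ a = tx K ^ (a - b) * tx K ^ b := by
      rw [← pow_add, Nat.sub_add_cancel h]
    calc ty K ^ a * tx K ^ a * (ty K ^ b * tx K ^ b)
        = ty K ^ a * tx K ^ (a-b) * ((tx K ^ b * ty K ^ b) * tx K ^ b) := by
          rw [ha]; noncomm_ring
      _ = ty K ^ a * (tx K ^ (a-b) * tx K ^ b) := by rw [xpow_ypow]; noncomm_ring
      _ = ty K ^ a * tx K ^ a := by rw [← pow_add, Nat.sub_add_cancel h]

lemma tf_eq (n : ℕ) : tf K (n + 1) = te K n - te K (n + 1) := by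
  simp [tf, te]

lemma tf_orth {m n : ℕ} (h : m ≠ n) : tf K (m + 1) * tf K (n + 1) = 0 := by
  rw [tf_eq, tf_eq, sub_mul, mul_sub, mul_sub, te_mul, te_mul, te_mul, te_mul]
  rcases lt_or_gt_of_ne h with hlt | hlt
  · have e1 : max m n = n := by omega
    have e2 : max m (n+1) = n+1 := by omega
    have e3 : max (m+1) n = n := by omega
    have e4 : max (m+1) (n+1) = n+1 := by omega
    rw [e1, e2, e3, e4]; noncomm_ring
  · have e1 : max m n = m := by omega
    have e2 : max m (n+1) = m := by omega
    have e3 : max (m+1) n = m+1 := by omega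
    have e4 : max (m+1) (n+1) = m+1 := by omega
    rw [e1, e2, e3, e4]; noncomm_ring

lemma tf_idem (n : ℕ) : tf K (n + 1) * tf K (n + 1) = tf K (n + 1) := by
  rw [tf_eq, sub_mul, mul_sub, mul_sub, te_mul, te_mul, te_mul, te_mul]
  have e1 : max n n = n := by omega
  have e2 : max n (n+1) = n+1 := by omega
  have e3 : max (n+1) n = n+1 := by omega
  rw [e1, e2, e3, max_self]; abel

lemma tx_te (b : ℕ) : tx K * te K (b + 1) = te K b * tx K := by
  simp only [te]; rw [pow_succ']
  calc tx K * (ty K * ty K ^ b * tx K ^ (b+1))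
      = (tx K * ty K) * (ty K ^ b * tx K ^ (b+1)) := by noncomm_ring
    _ = ty K ^ b * tx K ^ (b+1) := by rw [xy_one]; noncomm_ring
    _ = ty K ^ b * tx K ^ b * tx K := by rw [pow_succ]; noncomm_ring

lemma te_ty (b : ℕ) : te K (b + 1) * ty K = ty K * te K b := by
  simp only [te]; rw [pow_succ', pow_succ]
  calc ty K * ty K ^ b * (tx K ^ b * tx K) * ty K
      = ty K * (ty K ^ b * tx K ^ b) * (tx K * ty K) := by noncomm_ring
    _ = ty K * (ty K ^ b * tx K ^ b) := by rw [xy_one]; noncomm_ring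

lemma tf_mul_tx (n : ℕ) : tf K (n + 1) * tx K = tx K * tf K (n + 2) := by
  have h2 : tf K (n+2) = te K (n+1) - te K (n+2) := tf_eq K (n+1)
  rw [tf_eq, h2, mul_sub, tx_te, tx_te, sub_mul]

lemma tf_one_mul_ty : tf K 1 * ty K = 0 := by
  have h0 : tf K 1 = te K 0 - te K 1 := tf_eq K 0
  rw [h0, sub_mul, te_ty]
  simp [te]

lemma tf_mul_ty (n : ℕ) : tf K (n + 2) * ty K = ty K * tf K (n + 1) := by
  have h2 : tf K (n+2) = te K (n+1) - te K (n+2) := tf_eq K (n+1)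
  rw [h2, tf_eq, sub_mul, te_ty, te_ty, mul_sub]

/-- Right multiplication as a linear map over the (noncommutative) ring. -/
def rmul (c : Toeplitz K) : Toeplitz K →ₗ[Toeplitz K] Toeplitz K where
  toFun m := m * c
  map_add' a b := add_mul a b c
  map_smul' r a := by simp [smul_eq_mul, mul_assoc]

lemma adjoin_xy : Algebra.adjoin K {tx K, ty K} = ⊤ := by
  have h1 : (Algebra.adjoin K (Set.range (FreeAlgebra.ι K : Fin 2 → _))).map
      (RingQuot.mkAlgHom K (ToeplitzRel K)) = ⊤ := by
    rw [FreeAlgebra.adjoin_range_ι, Algebra.map_top, AlgHom.range_eq_top]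
    exact RingQuot.mkAlgHom_surjective K (ToeplitzRel K)
  rw [AlgHom.map_adjoin] at h1
  rw [eq_top_iff, ← h1]
  apply Algebra.adjoin_mono
  rintro _ ⟨_, ⟨i, rfl⟩, rfl⟩
  fin_cases i
  · exact Or.inl rfl
  · exact Or.inr rfl

/-- The two-sided ideal `I = ⟨1-yx⟩`, as a left ideal, is the internal direct sum
`⊕_{n ≥ 1} Rf_n` of the left ideals generated by the idempotents `f_n`. -/
theorem toeplitz_socle_direct_sum :
    iSupIndep (fun n : ℕ => Submodule.span (Toeplitz K) {tf K (n + 1)}) ∧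
    (⨆ n : ℕ, Submodule.span (Toeplitz K) {tf K (n + 1)}) =
      TwoSidedIdeal.asIdeal (TwoSidedIdeal.span {1 - ty K * tx K}) := by
  set S : Submodule (Toeplitz K) (Toeplitz K) :=
    ⨆ n : ℕ, Submodule.span (Toeplitz K) {tf K (n + 1)} with hS
  have hmemS : ∀ n : ℕ, tf K (n + 1) ∈ S := fun n =>
    (le_iSup (fun n : ℕ => Submodule.span (Toeplitz K) {tf K (n + 1)}) n)
      (Submodule.mem_span_singleton_self _)
  -- right absorption
  have habsorb : ∀ r : Toeplitz K, ∀ a ∈ S, a * r ∈ S := by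
    have hx : ∀ a ∈ S, a * tx K ∈ S := by
      intro a ha
      have : S ≤ S.comap (rmul K (tx K)) := by
        rw [hS]
        apply iSup_le
        intro n
        rw [Submodule.span_le, Set.singleton_subset_iff]
        show tf K (n+1) * tx K ∈ S
        rw [tf_mul_tx]
        exact Submodule.smul_mem _ (tx K) (hmemS (n+1))
      exact this ha
    have hy : ∀ a ∈ S, a * ty K ∈ S := by
      intro a ha
      have : S ≤ S.comap (rmul K (ty K)) := by
        rw [hS]
        apply iSup_le
        intro n
        rw [Submodule.span_le, Set.singleton_subset_iff]
        show tf K (n+1) * ty K ∈ S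
        cases n with
        | zero => rw [tf_one_mul_ty]; exact S.zero_mem
        | succ m =>
          rw [tf_mul_ty]
          exact Submodule.smul_mem _ (ty K) (hmemS m)
      exact this ha
    intro r
    let T : Subalgebra K (Toeplitz K) :=
      { carrier := {r | ∀ a ∈ S, a * r ∈ S}
        one_mem' := by intro a ha; simpa using ha
        mul_mem' := by
          intro p q hp hq a ha
          rw [← mul_assoc]
          exact hq _ (hp a ha)
        add_mem' := by
          intro p q hp hq a ha
          rw [mul_add]
          exact S.add_mem (hp a ha) (hq a ha)
        zero_mem' := by intro a ha; simp
        algebraMap_mem' := by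
          intro c a ha
          rw [← Algebra.commutes c a]
          simpa [smul_eq_mul] using S.smul_mem (algebraMap K (Toeplitz K) c) ha }
    have hT : r ∈ T := by
      have : Algebra.adjoin K {tx K, ty K} ≤ T := by
        apply Algebra.adjoin_le
        rintro z (rfl | rfl)
        · exact hx
        · exact hy
      rw [adjoin_xy] at this
      exact this trivial
    exact fun a ha => hT a ha
  constructor
  · -- independence
    intro i
    rw [Submodule.disjoint_def]
    intro a ha hb
    have hker : (⨆ (j) (_ : j ≠ i), Submodule.span (Toeplitz K) {tf K (j + 1)}) ≤
        LinearMap.ker (rmul K (tf K (i+1))) := by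
      apply iSup_le; intro j; apply iSup_le; intro hj
      rw [Submodule.span_le, Set.singleton_subset_iff]
      show tf K (j+1) * tf K (i+1) = 0
      exact tf_orth K hj
    have h0 : a * tf K (i+1) = 0 := hker hb
    obtain ⟨r, rfl⟩ := Submodule.mem_span_singleton.mp ha
    rw [smul_eq_mul, mul_assoc, tf_idem] at h0
    rw [smul_eq_mul, h0]
  · -- the equality
    apply le_antisymm
    · rw [hS]
      apply iSup_le
      intro n
      rw [Submodule.span_le, Set.singleton_subset_iff]
      rw [SetLike.mem_coe, TwoSidedIdeal.mem_asIdeal]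
      have key : tf K (n+1) = ty K ^ n * (1 - ty K * tx K) * tx K ^ n := by
        rw [tf_eq]; simp only [te]; rw [mul_sub, sub_mul, mul_one, pow_succ, pow_succ']
        noncomm_ring
      rw [key]
      exact TwoSidedIdeal.mul_mem_right _ _ _
        (TwoSidedIdeal.mul_mem_left _ _ _
          (TwoSidedIdeal.subset_span (Set.mem_singleton _)))
    · intro a ha
      have ha' : a ∈ TwoSidedIdeal.span {1 - ty K * tx K} :=
        TwoSidedIdeal.mem_asIdeal.mp ha
      let J : TwoSidedIdeal (Toeplitz K) :=
        TwoSidedIdeal.mk' (S : Set (Toeplitz K)) S.zero_mem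
          (fun h1 h2 => S.add_mem h1 h2) (fun h => S.neg_mem h)
          (fun {x y} h => S.smul_mem x h) (fun h => habsorb _ _ h)
      have hsub : ({1 - ty K * tx K} : Set (Toeplitz K)) ⊆ J := by
        rintro z rfl
        rw [SetLike.mem_coe, TwoSidedIdeal.mem_mk']
        have : (1 : Toeplitz K) - ty K * tx K = tf K (0 + 1) := by
          simp [tf]
        rw [this]
        exact hmemS 0
      have := TwoSidedIdeal.mem_span_iff.mp ha' J hsub
      rwa [TwoSidedIdeal.mem_mk'] at this
end
end

section
/- Let R = K⟨x,y⟩/(xy−1) and let H = Σ ⊕ Rp(x) be a left ideal with p(x) ≠ 0 a polynomial in x and Σ ⊆ I semisimple. Then H is finitely generated and Σ has finite length. -/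
noncomputable section

variable (K : Type*) [Field K]

/-!
Since `Σ ∩ R p(x) = 0`, `Σ` embeds in `R ⧸ R p(x)`, so it suffices that every cyclic module
`V = R v` with `p(x) v = 0` has finite length: then `Σ` is Noetherian, hence finitely generated,
and so is `H`.

Put `e = 1 - y x` and let `N` be generated by the `e x^i v`, `i < deg p`. Since `x e = 0`, each
generator is a quotient of `R ⧸ R x`, which is simple (there `x` lowers degrees in `y`), so `N` has
finite length. Division by `p` gives `e x^k v ∈ N` for all `k`, hence `e V ⊆ N`. On `V ⧸ N` the
element `y x = 1 - e` then acts as the identity, so `x` is injective on the finite-dimensional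
`x`-stable subspace spanned by the `x^i v`, `i < deg p`; it is therefore bijective there, the
subspace is also `y`-stable, and it is all of `V ⧸ N`.
-/

open Polynomial Submodule

section FiniteLength

variable {A M : Type*} [Ring A] [AddCommGroup M] [Module A M]

theorem span_singleton_mk_eq_top {N : Submodule A M} {v : M} (hv : A ∙ v = ⊤) :
    A ∙ (Submodule.Quotient.mk v : M ⧸ N) = ⊤ := by
  have := map_span N.mkQ {v}
  rwa [Set.image_singleton, hv, Submodule.map_top, range_mkQ, eq_comm] at this

theorem IsFiniteLength.of_submodule_of_quotient {N : Submodule A M}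
    (hN : IsFiniteLength A N) (hQ : IsFiniteLength A (M ⧸ N)) : IsFiniteLength A M := by
  rw [isFiniteLength_iff_isNoetherian_isArtinian] at *
  exact ⟨(isNoetherian_iff_submodule_quotient N).mpr ⟨hN.1, hQ.1⟩,
    (isArtinian_iff_submodule_quotient N).mpr ⟨hN.2, hQ.2⟩⟩

theorem isFiniteLength_of_tower (K : Type*) [Field K] [Algebra K A] [Module K M]
    [IsScalarTower K A M] [Module.Finite K M] : IsFiniteLength A M :=
  isFiniteLength_iff_isNoetherian_isArtinian.mpr
    ⟨isNoetherian_of_tower K inferInstance, isArtinian_of_tower K inferInstance⟩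

theorem isFiniteLength_span_range_of_smul_eq_zero {ι : Type*} [Finite ι] {J : Submodule A A}
    (hJ : IsFiniteLength A (A ⧸ J)) {g : ι → M} (hg : ∀ i, ∀ a ∈ J, a • g i = 0) :
    IsFiniteLength A (span A (Set.range g)) := by
  have hspan (i : ι) : IsNoetherian A (A ∙ g i) ∧ IsArtinian A (A ∙ g i) := by
    have hker : J ≤ LinearMap.ker (LinearMap.toSpanSingleton A M (g i)) := hg i
    rw [LinearMap.span_singleton_eq_range, ← range_liftQ J _ hker,
      ← isFiniteLength_iff_isNoetherian_isArtinian]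
    exact hJ.of_surjective (LinearMap.surjective_rangeRestrict _)
  have := fun i => (hspan i).1
  have := fun i => (hspan i).2
  rw [span_range_eq_iSup, isFiniteLength_iff_isNoetherian_isArtinian]
  exact ⟨isNoetherian_iSup, isArtinian_iSup⟩

end FiniteLength

variable {K} in
def Polynomial.divXLinearMap : K[X] →ₗ[K] K[X] where
  toFun := divX
  map_add' _ _ := divX_add
  map_smul' c f := by ext; simp [coeff_divX]

namespace Toeplitz

variable {K}

theorem tx_mul_ty : tx K * ty K = 1 := by
  have h := RingQuot.mkAlgHom_rel K (ToeplitzRel.rel (K := K))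
  rwa [map_mul, map_one] at h

variable (K) in
def e : Toeplitz K := 1 - ty K * tx K

theorem tx_mul_e : tx K * e K = 0 := by
  rw [e, mul_sub, mul_one, ← mul_assoc, tx_mul_ty, one_mul, sub_self]

theorem e_mul_ty : e K * ty K = 0 := by
  rw [e, sub_mul, one_mul, mul_assoc, tx_mul_ty, mul_one, sub_self]

theorem ty_mul_tx : ty K * tx K = 1 - e K := by
  rw [e, sub_sub_cancel]

variable (K) in
def polyRep : Toeplitz K →ₐ[K] Module.End K K[X] :=
  RingQuot.liftAlgHom K ⟨FreeAlgebra.lift K ![divXLinearMap, LinearMap.mulLeft K X], by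
    rintro _ _ ⟨⟩
    refine LinearMap.ext fun f => ext fun n => ?_
    simp [divXLinearMap, coeff_divX]⟩

theorem one_notMem_span_tx : (1 : Toeplitz K) ∉ Toeplitz K ∙ tx K := by
  intro h
  obtain ⟨r, hr⟩ := mem_span_singleton.mp h
  have := congrArg (fun r => polyRep K r 1) hr
  simp [polyRep, tx, divXLinearMap] at this

section Modules

variable {V : Type*} [AddCommGroup V] [Module (Toeplitz K) V] [Module K V]
  [IsScalarTower K (Toeplitz K) V]

theorem smul_mem_of_stable (W : Submodule K V) (hx : ∀ m ∈ W, tx K • m ∈ W)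
    (hy : ∀ m ∈ W, ty K • m ∈ W) (r : Toeplitz K) {m : V} (hm : m ∈ W) : r • m ∈ W := by
  obtain ⟨f, rfl⟩ := RingQuot.mkAlgHom_surjective K (ToeplitzRel K) r
  induction f using FreeAlgebra.induction generalizing m with
  | grade0 c => rw [AlgHom.commutes, algebraMap_smul]; exact W.smul_mem c hm
  | grade1 i =>
    fin_cases i
    · exact hx m hm
    · exact hy m hm
  | mul a b ha hb => rw [map_mul, mul_smul]; exact ha (hb hm)
  | add a b ha hb => rw [map_add, add_smul]; exact W.add_mem (ha hm) (hb hm)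

variable {p : K[X]} {v : V}

theorem aeval_tx_smul_mem_span (hp : p ≠ 0) (hv : aeval (tx K) p • v = 0) (f : K[X]) :
    aeval (tx K) f • v ∈ span K (Set.range fun i : Fin p.natDegree => tx K ^ (i : ℕ) • v) := by
  classical
  let ψ : K[X] →ₗ[K] V :=
    (LinearMap.toSpanSingleton (Toeplitz K) V v).restrictScalars K ∘ₗ (aeval (tx K)).toLinearMap
  have hmod : aeval (tx K) f • v = ψ (f % p) := by
    conv_lhs => rw [← EuclideanDomain.div_add_mod f p, mul_comm]
    simp [ψ, add_smul, mul_smul, hv]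
  have hdeg : f % p ∈ degreeLT K p.natDegree := by
    rw [mem_degreeLT, ← degree_eq_natDegree hp]
    exact degree_mod_lt f hp
  rw [degreeLT_eq_span_X_pow] at hdeg
  have := mem_map_of_mem (f := ψ) hdeg
  rw [map_span, ← hmod] at this
  refine span_le.mpr ?_ this
  rintro _ ⟨_, hq, rfl⟩
  obtain ⟨i, hi, rfl⟩ := Finset.mem_image.mp hq
  exact subset_span ⟨⟨i, Finset.mem_range.mp hi⟩, by simp [ψ]⟩

theorem e_smul_mem_span (hp : p ≠ 0) (hv : aeval (tx K) p • v = 0)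
    (hV : Toeplitz K ∙ v = ⊤) (m : V) :
    e K • m ∈ span (Toeplitz K)
      (Set.range fun i : Fin p.natDegree => (e K * tx K ^ (i : ℕ)) • v) := by
  set N := span (Toeplitz K) (Set.range fun i : Fin p.natDegree => (e K * tx K ^ (i : ℕ)) • v)
  -- `U` is `y`-stable because `e y = 0` and `x^(k+1) y = x^k`.
  let U : Submodule K V :=
    ⨅ k : ℕ, (N.restrictScalars K).comap (Algebra.lsmul K K V (e K * tx K ^ k))
  have hU {m : V} : m ∈ U ↔ ∀ k : ℕ, (e K * tx K ^ k) • m ∈ N := by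
    simp only [U, mem_iInf, mem_comap, Algebra.lsmul_apply, restrictScalars_mem]
  have hvU : v ∈ U := hU.mpr fun k => by
    have := mem_map_of_mem (f := Algebra.lsmul K K V (e K)) (aeval_tx_smul_mem_span hp hv (X ^ k))
    rw [map_span] at this
    refine (span_le.mpr ?_ : _ ≤ N.restrictScalars K) (by simpa [mul_smul] using this)
    rintro _ ⟨_, ⟨i, rfl⟩, rfl⟩
    exact subset_span ⟨i, by simp [mul_smul]⟩
  have hx : ∀ m ∈ U, tx K • m ∈ U := fun m hm => hU.mpr fun k => by
    simpa [← mul_smul, mul_assoc, ← pow_succ] using hU.mp hm (k + 1)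
  have hy : ∀ m ∈ U, ty K • m ∈ U := by
    intro m hm
    rw [hU]
    rintro (_ | k)
    · simp [← mul_smul, e_mul_ty]
    · rw [← mul_smul, pow_succ, mul_assoc, mul_assoc, tx_mul_ty, mul_one]
      exact hU.mp hm k
  obtain ⟨r, rfl⟩ := mem_span_singleton.mp (hV ▸ mem_top : m ∈ Toeplitz K ∙ v)
  simpa using hU.mp (smul_mem_of_stable U hx hy r hvU) 0

theorem finite_of_forall_e_smul_eq_zero (hp : p ≠ 0) (hv : aeval (tx K) p • v = 0)
    (hV : Toeplitz K ∙ v = ⊤) (he : ∀ m : V, e K • m = 0) : Module.Finite K V := by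
  set W := span K (Set.range fun i : Fin p.natDegree => tx K ^ (i : ℕ) • v)
  have hyx (m : V) : ty K • tx K • m = m := by
    rw [smul_smul, ty_mul_tx, sub_smul, one_smul, he, sub_zero]
  have hxW : ∀ m ∈ W, tx K • m ∈ W := by
    intro m hm
    induction hm using span_induction with
    | mem _ h =>
      obtain ⟨i, rfl⟩ := h
      simpa [smul_smul, ← pow_succ'] using aeval_tx_smul_mem_span hp hv (X ^ ((i : ℕ) + 1))
    | zero => simp
    | add _ _ _ _ h₁ h₂ => rw [smul_add]; exact add_mem h₁ h₂
    | smul c _ _ h => rw [smul_comm]; exact W.smul_mem c h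
  have : Module.Finite K W := Module.Finite.span_of_finite K (Set.finite_range _)
  let T : W →ₗ[K] W := (Algebra.lsmul K K V (tx K)).restrict hxW
  have hT : Function.Surjective T := LinearMap.injective_iff_surjective.mp fun a b hab => by
    have := congrArg (fun w : W => ty K • (w : V)) hab
    change ty K • tx K • (a : V) = ty K • tx K • (b : V) at this
    rw [hyx, hyx] at this
    exact Subtype.ext this
  have hyW : ∀ m ∈ W, ty K • m ∈ W := by
    intro m hm
    obtain ⟨w, hw⟩ := hT ⟨m, hm⟩
    have : ty K • m = w := by
      rw [← hyx w]
      exact congrArg (ty K • ·) (congrArg Subtype.val hw).symm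
    exact this ▸ w.2
  have hvW : v ∈ W := by simpa using aeval_tx_smul_mem_span hp hv 1
  refine Module.Finite.of_surjective W.subtype fun m => ?_
  obtain ⟨r, rfl⟩ := mem_span_singleton.mp (hV ▸ mem_top : m ∈ Toeplitz K ∙ v)
  exact ⟨⟨_, smul_mem_of_stable W hxW hyW r hvW⟩, rfl⟩

end Modules

section SimpleQuotient

theorem tx_mul_aeval_ty (f : K[X]) :
    tx K * aeval (ty K) f = aeval (ty K) (divX f) + f.coeff 0 • tx K := by
  have h := congrArg (aeval (ty K)) (X_mul_divX_add f)
  rw [← h, map_add, map_mul, aeval_X, aeval_C, mul_add, ← mul_assoc, tx_mul_ty, one_mul,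
    Algebra.algebraMap_eq_smul_one, mul_smul_comm, mul_one]

theorem tx_smul_mk_aeval_ty (f : K[X]) :
    tx K • (Submodule.Quotient.mk (aeval (ty K) f) : Toeplitz K ⧸ (Toeplitz K ∙ tx K)) =
      Submodule.Quotient.mk (aeval (ty K) (divX f)) := by
  rw [← Quotient.mk_smul, Submodule.Quotient.eq, smul_eq_mul, tx_mul_aeval_ty,
    add_sub_cancel_left]
  exact smul_of_tower_mem _ _ (mem_span_singleton_self _)

theorem exists_mk_aeval_ty_eq (m : Toeplitz K ⧸ (Toeplitz K ∙ tx K)) :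
    ∃ f : K[X], Submodule.Quotient.mk (aeval (ty K) f) = m := by
  let W : Submodule K (Toeplitz K ⧸ (Toeplitz K ∙ tx K)) :=
    LinearMap.range ((Toeplitz K ∙ tx K).mkQ.restrictScalars K ∘ₗ (aeval (ty K)).toLinearMap)
  have hx : ∀ m ∈ W, tx K • m ∈ W := by
    rintro _ ⟨f, rfl⟩
    exact ⟨divX f, (tx_smul_mk_aeval_ty f).symm⟩
  have hy : ∀ m ∈ W, ty K • m ∈ W := by
    rintro _ ⟨f, rfl⟩
    exact ⟨X * f, by simp [← Quotient.mk_smul]⟩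
  obtain ⟨r, rfl⟩ := Submodule.Quotient.mk_surjective _ m
  obtain ⟨f, hf⟩ := smul_mem_of_stable W hx hy r (m := Submodule.Quotient.mk 1) ⟨1, by simp⟩
  exact ⟨f, by simpa [← Quotient.mk_smul] using hf⟩

theorem mk_one_mem_span_mk_aeval_ty {f : K[X]} (hf : f ≠ 0) :
    (Submodule.Quotient.mk 1 : Toeplitz K ⧸ (Toeplitz K ∙ tx K)) ∈
      Toeplitz K ∙ Submodule.Quotient.mk (aeval (ty K) f) := by
  induction h : f.natDegree using Nat.strong_induction_on generalizing f with
  | _ n ih =>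
  by_cases hn : n = 0
  · have hc : f.coeff 0 ≠ 0 := by
      rwa [Ne, ← leadingCoeff_eq_zero, leadingCoeff, h, hn] at hf
    rw [eq_C_of_natDegree_eq_zero (h.trans hn), aeval_C]
    have := smul_mem _ (algebraMap K (Toeplitz K) (f.coeff 0)⁻¹) (mem_span_singleton_self
      (R := Toeplitz K) (Submodule.Quotient.mk (p := Toeplitz K ∙ tx K)
        (algebraMap K (Toeplitz K) (f.coeff 0))))
    rwa [← Quotient.mk_smul, smul_eq_mul, ← map_mul, inv_mul_cancel₀ hc, map_one] at this
  · have hdivX : divX f ≠ 0 := by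
      rw [Ne, divX_eq_zero_iff]
      intro h0
      rw [h0, natDegree_C] at h
      exact hn h.symm
    have := ih (n - 1) (by omega) hdivX (by rw [natDegree_divX_eq_natDegree_tsub_one, h])
    rw [← tx_smul_mk_aeval_ty] at this
    exact span_singleton_smul_le _ _ _ this

theorem isSimpleModule_quotient_span_tx :
    IsSimpleModule (Toeplitz K) (Toeplitz K ⧸ (Toeplitz K ∙ tx K)) := by
  rw [isSimpleModule_iff_toSpanSingleton_surjective]
  refine ⟨nontrivial_of_ne (Submodule.Quotient.mk 1) 0
    ((Quotient.mk_eq_zero _).not.mpr one_notMem_span_tx), fun z hz => ?_⟩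
  obtain ⟨f, rfl⟩ := exists_mk_aeval_ty_eq z
  have hf : f ≠ 0 := by rintro rfl; simp at hz
  rw [← LinearMap.range_eq_top, ← LinearMap.span_singleton_eq_range, eq_top_iff,
    ← span_singleton_mk_eq_top (Ideal.span_singleton_one), span_le, Set.singleton_subset_iff]
  exact mk_one_mem_span_mk_aeval_ty hf

end SimpleQuotient

theorem isFiniteLength_of_aeval_tx_smul_eq_zero {V : Type*} [AddCommGroup V]
    [Module (Toeplitz K) V] [Module K V] [IsScalarTower K (Toeplitz K) V] {p : K[X]} {v : V}
    (hp : p ≠ 0) (hv : aeval (tx K) p • v = 0) (hV : Toeplitz K ∙ v = ⊤) :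
    IsFiniteLength (Toeplitz K) V := by
  set N := span (Toeplitz K) (Set.range fun i : Fin p.natDegree => (e K * tx K ^ (i : ℕ)) • v)
  have hN : IsFiniteLength (Toeplitz K) N := by
    have := isSimpleModule_quotient_span_tx (K := K)
    refine isFiniteLength_span_range_of_smul_eq_zero (J := Toeplitz K ∙ tx K)
      (isFiniteLength_iff_isNoetherian_isArtinian.mpr ⟨inferInstance, inferInstance⟩) ?_
    intro i a ha
    obtain ⟨r, rfl⟩ := mem_span_singleton.mp ha
    rw [smul_smul, smul_eq_mul, mul_assoc, ← mul_assoc (tx K), tx_mul_e, zero_mul, mul_zero,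
      zero_smul]
  have : Module.Finite K (V ⧸ N) := by
    refine finite_of_forall_e_smul_eq_zero (v := Submodule.Quotient.mk v) hp
      (by rw [← Quotient.mk_smul, hv, Quotient.mk_zero]) (span_singleton_mk_eq_top hV) fun m => ?_
    obtain ⟨m, rfl⟩ := Submodule.Quotient.mk_surjective _ m
    rw [← Quotient.mk_smul, Quotient.mk_eq_zero]
    exact e_smul_mem_span hp hv hV m
  exact hN.of_submodule_of_quotient (isFiniteLength_of_tower K)

end Toeplitz

theorem toeplitz_left_ideal_fg (p : Polynomial K) (hp : p ≠ 0)
    (S : Submodule (Toeplitz K) (Toeplitz K))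
    (hdisj : Disjoint S (Submodule.span (Toeplitz K) {Polynomial.aeval (tx K) p})) :
    (S ⊔ Submodule.span (Toeplitz K) {Polynomial.aeval (tx K) p}).FG ∧
    IsFiniteLength (Toeplitz K) S := by
  have hP : IsFiniteLength (Toeplitz K) (Toeplitz K ⧸ Toeplitz K ∙ aeval (tx K) p) :=
    Toeplitz.isFiniteLength_of_aeval_tx_smul_eq_zero (v := Submodule.Quotient.mk 1) hp
      (by rw [← Quotient.mk_smul, smul_eq_mul, mul_one, Quotient.mk_eq_zero]
          exact mem_span_singleton_self _)
      (span_singleton_mk_eq_top Ideal.span_singleton_one)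
  have hS : IsFiniteLength (Toeplitz K) S :=
    hP.of_injective (f := (Toeplitz K ∙ aeval (tx K) p).mkQ ∘ₗ S.subtype) fun a b hab =>
      Subtype.ext <| sub_eq_zero.mp <|
        hdisj.le_bot ⟨sub_mem a.2 b.2, (Submodule.Quotient.eq _).mp hab⟩
  have := (isFiniteLength_iff_isNoetherian_isArtinian.mp hS).1
  exact ⟨(Module.Finite.iff_fg.mp inferInstance).sup (fg_span_singleton _), hS⟩
end
end
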